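/- Correctness of the hybrid classical-quantum Walsh–Hadamard algorithm: Let n be a positive integer, N = 2^n, let a : {0,...,N-1} → ℝ, and let ε > 0. Set b_0 = ε + Σ_{m=0}^{N-1} |a_m|; let Ã : {0,...,N-1} → ℝ be given by Ã(0) = b_0 and Ã(m) = a_m for m ≥ 1; let c = ‖Ã‖₂ = √(b_0² + Σ_{m=1}^{N-1} a_m²); let p_k = ((HÃ)_k)² / c² for each k; and let δ = (b_0 − a_0)/√N. Then for every k with 0 ≤ k ≤ N-1, c·√(p_k) − δ = (Ha)_k, i.e., the algorithm's output vector equals the Walsh–Hadamard transform of a. -/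

import Mathlib

/-- `bip n k m = ∑_{i=0}^{n-1} k_i m_i`, the sum of products of binary digits of `k` and `m`. -/
def bip (n k m : ℕ) : ℕ := ∑ i ∈ Finset.range n, (k / 2 ^ i % 2) * (m / 2 ^ i % 2)

/-- The Walsh–Hadamard transform of `v` (of size `N = 2^n`):
`(Hv)_k = (1/√N) ∑_{m=0}^{N-1} (-1)^{⟨k,m⟩} v_m`. -/
noncomputable def wh (n : ℕ) (v : ℕ → ℝ) (k : ℕ) : ℝ :=
  (1 / Real.sqrt (2 ^ n)) * ∑ m ∈ Finset.range (2 ^ n), (-1 : ℝ) ^ (bip n k m) * v m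

/-!
Adding `b₀ - a₀` to the first entry shifts every Walsh–Hadamard coefficient by the same amount
`δ = (b₀ - a₀)/√N`, because the zeroth Hadamard column is constant. The choice
`b₀ = ε + ∑ |a_m|` makes the zeroth entry dominate, so every coefficient of `HÃ` is positive and
the sign lost when reading `|(HÃ)_k| = c √p_k` off the measurement probabilities is known.
-/

open Finset

lemma bip_zero_right (n k : ℕ) : bip n k 0 = 0 := by
  simp [bip]

lemma wh_eq_add_of_eq_of_one_le (n k : ℕ) {v w : ℕ → ℝ} (h : ∀ m, 1 ≤ m → w m = v m) :
    wh n w k = wh n v k + (w 0 - v 0) / Real.sqrt (2 ^ n) := by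
  have hdiff : ∑ m ∈ range (2 ^ n), (-1 : ℝ) ^ bip n k m * (w m - v m) = w 0 - v 0 := by
    have hvanish : ∀ m ∈ range (2 ^ n), m ≠ 0 → (-1 : ℝ) ^ bip n k m * (w m - v m) = 0 :=
      fun m _ hm => by rw [h m (Nat.one_le_iff_ne_zero.mpr hm), sub_self, mul_zero]
    rw [sum_eq_single_of_mem 0 (mem_range.mpr (by positivity)) hvanish, bip_zero_right, pow_zero,
      one_mul]
  simp only [wh, mul_sub, sum_sub_distrib] at hdiff ⊢
  rw [← hdiff]
  ring

lemma abs_sum_neg_one_pow_mul_le {ι : Type*} (s : Finset ι) (e : ι → ℕ) (v : ι → ℝ) :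
    |∑ i ∈ s, (-1 : ℝ) ^ e i * v i| ≤ ∑ i ∈ s, |v i| :=
  (abs_sum_le_sum_abs _ _).trans_eq <| sum_congr rfl fun i _ => by simp

lemma wh_pos_of_sum_abs_lt (n k : ℕ) {v : ℕ → ℝ} (h : ∑ m ∈ Ico 1 (2 ^ n), |v m| < v 0) :
    0 < wh n v k := by
  have hsplit : ∑ m ∈ range (2 ^ n), (-1 : ℝ) ^ bip n k m * v m
      = v 0 + ∑ m ∈ Ico 1 (2 ^ n), (-1 : ℝ) ^ bip n k m * v m := by
    rw [range_eq_Ico, sum_eq_sum_Ico_succ_bot (by positivity), bip_zero_right, pow_zero, one_mul]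
  have hbound := neg_abs_le (∑ m ∈ Ico 1 (2 ^ n), (-1 : ℝ) ^ bip n k m * v m)
  have := abs_sum_neg_one_pow_mul_le (Ico 1 (2 ^ n)) (bip n k) v
  rw [wh, hsplit]
  exact mul_pos (by positivity) (by linarith)

lemma mul_sqrt_sq_div_sq {c x : ℝ} (hc : 0 < c) (hx : 0 ≤ x) :
    c * Real.sqrt (x ^ 2 / c ^ 2) = x := by
  rw [Real.sqrt_div' _ (sq_nonneg c), Real.sqrt_sq hx, Real.sqrt_sq hc.le, mul_div_cancel₀ _ hc.ne']

theorem stmt_4_general (n : ℕ) (a : ℕ → ℝ) (ε : ℝ) (hε : 0 < ε)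
    (b₀ : ℝ) (hb₀ : b₀ = ε + ∑ m ∈ Finset.range (2 ^ n), |a m|)
    (A : ℕ → ℝ) (hA0 : A 0 = b₀) (hA : ∀ m, 1 ≤ m → A m = a m)
    (c : ℝ) (hc : c = Real.sqrt (b₀ ^ 2 + ∑ m ∈ Finset.Ico 1 (2 ^ n), a m ^ 2))
    (p : ℕ → ℝ) (hp : ∀ k, p k = (wh n A k) ^ 2 / c ^ 2)
    (δ : ℝ) (hδ : δ = (b₀ - a 0) / Real.sqrt (2 ^ n)) :
    ∀ k < 2 ^ n, c * Real.sqrt (p k) - δ = wh n a k := by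
  intro k _
  have hA_dominant : ∑ m ∈ Ico 1 (2 ^ n), |A m| < A 0 := by
    have hIco : ∑ m ∈ Ico 1 (2 ^ n), |a m| ≤ ∑ m ∈ range (2 ^ n), |a m| :=
      sum_le_sum_of_subset_of_nonneg (fun m hm => mem_range.mpr (mem_Ico.mp hm).2)
        fun m _ _ => abs_nonneg _
    rw [sum_congr rfl fun m hm => by rw [hA m (mem_Ico.mp hm).1], hA0, hb₀]
    linarith
  have hc_pos : 0 < c := by
    have : 0 < b₀ := by
      rw [← hA0]
      exact (sum_nonneg fun _ _ => abs_nonneg _).trans_lt hA_dominant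
    rw [hc]
    positivity
  rw [hp, mul_sqrt_sq_div_sq hc_pos (wh_pos_of_sum_abs_lt n k hA_dominant).le,
    wh_eq_add_of_eq_of_one_le n k hA, hA0, hδ, add_sub_cancel_right]

/-- Correctness of the hybrid classical-quantum Walsh–Hadamard algorithm. -/
theorem stmt_4 (n : ℕ) (hn : 0 < n) (a : ℕ → ℝ) (ε : ℝ) (hε : 0 < ε)
    (b₀ : ℝ) (hb₀ : b₀ = ε + ∑ m ∈ Finset.range (2 ^ n), |a m|)
    (A : ℕ → ℝ) (hA0 : A 0 = b₀) (hA : ∀ m, 1 ≤ m → A m = a m)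
    (c : ℝ) (hc : c = Real.sqrt (b₀ ^ 2 + ∑ m ∈ Finset.Ico 1 (2 ^ n), a m ^ 2))
    (p : ℕ → ℝ) (hp : ∀ k, p k = (wh n A k) ^ 2 / c ^ 2)
    (δ : ℝ) (hδ : δ = (b₀ - a 0) / Real.sqrt (2 ^ n)) :
    ∀ k < 2 ^ n, c * Real.sqrt (p k) - δ = wh n a k :=
  stmt_4_general n a ε hε b₀ hb₀ A hA0 hA c hc p hp δ hδ
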